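/- arXiv:2405.01262 — 8 statements merged into one kernel-verified Lean document; each statement's English description precedes it below -/
import Mathlib

section
/- Let (W, ·) be a magma with the powerset operations A ∘ B = {a·b : a ∈ A, b ∈ B} and A\C = {u : ∀a ∈ A, a·u ∈ C}. Then the magma satisfies the self-distributivity law w·(x·z) = (w·x)·(w·z) for all w,x,z ∈ W if and only if the inclusion A\(B\C) ⊆ (A\B)\(A\C) holds for all subsets A, B, C of W. -/
/-- Pointwise product of subsets of a magma. -/
def magComp {W : Type*} (mul : W → W → W) (A B : Set W) : Set W :=
  {w | ∃ a ∈ A, ∃ b ∈ B, w = mul a b}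

/-- Left residual: `A \ C`. -/
def magLRes {W : Type*} (mul : W → W → W) (A C : Set W) : Set W :=
  {u | ∀ a ∈ A, mul a u ∈ C}

theorem stmt_1 {W : Type*} (mul : W → W → W) :
    (∀ w x z : W, mul w (mul x z) = mul (mul w x) (mul w z)) ↔
    (∀ A B C : Set W,
      magLRes mul A (magLRes mul B C) ⊆
        magLRes mul (magLRes mul A B) (magLRes mul A C)) := by
  constructor
  · intro h A B C u hu x hx a ha
    have h1 : mul a u ∈ magLRes mul B C := hu a ha
    have h2 : mul a x ∈ B := hx a ha
    have := h1 (mul a x) h2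
    rw [h a x u]
    exact this
  · intro h w x z
    have hz : z ∈ magLRes mul {w} (magLRes mul {mul w x} {mul (mul w x) (mul w z)}) := by
      intro a ha
      rw [Set.mem_singleton_iff] at ha; subst ha
      intro b hb
      rw [Set.mem_singleton_iff] at hb; subst hb
      rfl
    have hx : x ∈ magLRes mul {w} {mul w x} := by
      intro a ha
      rw [Set.mem_singleton_iff] at ha; subst ha
      rfl
    have := h {w} {mul w x} {mul (mul w x) (mul w z)} hz x hx w rfl
    simpa using this
end

section
/- (Ackermann Lemma, positive form.) Let L be a lattice, α ∈ L, and let β, ε, γ, δ : L → L with β and ε antitone and γ and δ monotone. Then the following are equivalent: (1) for all p ∈ L, if p ≤ α and β(p) ≤ γ(p) then δ(p) ≤ ε(p); (2) if β(α) ≤ γ(α) then δ(α) ≤ ε(α). -/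
theorem stmt_4 {L : Type*} [Lattice L] (α : L) (β ε γ δ : L → L)
    (hβ : Antitone β) (hε : Antitone ε) (hγ : Monotone γ) (hδ : Monotone δ) :
    (∀ p : L, p ≤ α → β p ≤ γ p → δ p ≤ ε p) ↔
    (β α ≤ γ α → δ α ≤ ε α) := by
  constructor
  · intro h hβγ
    exact h α le_rfl hβγ
  · intro h p hp hβγ
    have : β α ≤ γ α := le_trans (hβ hp) (le_trans hβγ (hγ hp))
    exact le_trans (hδ hp) (le_trans (h this) (hε hp))
end

section
/- (Ackermann Lemma, negative form.) Let L be a lattice, α ∈ L, and let β, ε, γ, δ : L → L with β and ε antitone and γ and δ monotone. Then the following are equivalent: (1) for all p ∈ L, if α ≤ p and γ(p) ≤ β(p) then ε(p) ≤ δ(p); (2) if γ(α) ≤ β(α) then ε(α) ≤ δ(α). -/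
theorem stmt_5 {L : Type*} [Lattice L] (α : L) (β ε γ δ : L → L)
    (hβ : Antitone β) (hε : Antitone ε) (hγ : Monotone γ) (hδ : Monotone δ) :
    (∀ p : L, α ≤ p → γ p ≤ β p → ε p ≤ δ p) ↔
    (γ α ≤ β α → ε α ≤ δ α) := by
  constructor
  · intro h hγα
    exact h α le_rfl hγα
  · intro h p hαp hγp
    have hεα : ε α ≤ δ α := h (((hγ hαp).trans hγp).trans (hβ hαp))
    exact ((hε hαp).trans hεα).trans (hδ hαp)
end

section
/- Let L be a complete lattice, let □ : L → L preserve arbitrary infima with left adjoint ◆ (i.e. ◆x ≤ y iff x ≤ □y), and let (∘, \, /) be a residuated family on L: x ∘ y ≤ z iff y ≤ x\z iff x ≤ z/y. Then the inequality □(◆p \ q) ≤ p \ □q holds for all p, q ∈ L if and only if the inequality □(p \ q) ≤ □p \ □q holds for all p, q ∈ L. -/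
theorem stmt_8 {L : Type*} [CompleteLattice L]
    (box bd : L → L)
    (hbox : ∀ S : Set L, box (sInf S) = ⨅ s ∈ S, box s)
    (hadj : ∀ x y : L, bd x ≤ y ↔ x ≤ box y)
    (comp ld rd : L → L → L)
    (hres1 : ∀ x y z : L, comp x y ≤ z ↔ y ≤ ld x z)
    (hres2 : ∀ x y z : L, comp x y ≤ z ↔ x ≤ rd z y) :
    (∀ p q : L, box (ld (bd p) q) ≤ ld p (box q)) ↔
    (∀ p q : L, box (ld p q) ≤ ld (box p) (box q)) := by
  have boxmono : ∀ {x y : L}, x ≤ y → box x ≤ box y := by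
    intro x y h
    rw [← hadj]
    exact le_trans ((hadj _ _).mpr le_rfl) h
  have compmono : ∀ {a b : L} (c : L), a ≤ b → comp a c ≤ comp b c := by
    intro a b c h
    rw [hres2]
    exact le_trans h ((hres2 _ _ _).mp le_rfl)
  have ldanti : ∀ {a b : L} (c : L), a ≤ b → ld b c ≤ ld a c := by
    intro a b c h
    rw [← hres1]
    exact le_trans (compmono _ h) ((hres1 _ _ _).mpr le_rfl)
  constructor
  · intro H p q
    exact le_trans (boxmono (ldanti q ((hadj _ _).mpr le_rfl))) (H (box p) q)
  · intro H p q
    exact le_trans (H (bd p) q) (ldanti (box q) ((hadj _ _).mp le_rfl))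
end

section
/- Let L be a complete lattice with a residuated binary operation ∘ (with residuals \ and /: x ∘ y ≤ z ⟺ y ≤ x\z ⟺ x ≤ z/y). Then the following are equivalent: (1) for all p, q, r ∈ L, p ≤ q \ (r \ ((r ∘ q) ∘ (r ∘ p))); (2) for all a, b, c ∈ L, a \ (b \ c) ≤ (a \ b) \ (a \ c). -/
theorem stmt_9 {L : Type*} [CompleteLattice L]
    (comp ld rd : L → L → L)
    (hres1 : ∀ x y z : L, comp x y ≤ z ↔ y ≤ ld x z)
    (hres2 : ∀ x y z : L, comp x y ≤ z ↔ x ≤ rd z y) :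
    (∀ p q r : L, p ≤ ld q (ld r (comp (comp r q) (comp r p)))) ↔
    (∀ a b c : L, ld a (ld b c) ≤ ld (ld a b) (ld a c)) := by
  have counit : ∀ x z : L, comp x (ld x z) ≤ z := fun x z => (hres1 x _ z).mpr le_rfl
  have unit : ∀ x y : L, y ≤ ld x (comp x y) := fun x y => (hres1 x y _).mp le_rfl
  have monoR : ∀ x : L, ∀ {y y' : L}, y ≤ y' → comp x y ≤ comp x y' := by
    intro x y y' h
    exact (hres1 x y _).mpr (h.trans (unit x y'))
  have monoL : ∀ {x x' : L} (y : L), x ≤ x' → comp x y ≤ comp x' y := by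
    intro x x' y h
    exact (hres2 x y _).mpr (h.trans ((hres2 x' y _).mp le_rfl))
  have ldmono : ∀ x : L, ∀ {z z' : L}, z ≤ z' → ld x z ≤ ld x z' := by
    intro x z z' h
    exact (hres1 x _ z').mp ((counit x z).trans h)
  constructor
  · intro h a b c
    refine (h (ld a (ld b c)) (ld a b) a).trans ?_
    refine ldmono _ (ldmono _ ?_)
    calc comp (comp a (ld a b)) (comp a (ld a (ld b c)))
        ≤ comp b (ld b c) :=
          le_trans (monoL _ (counit a b)) (monoR _ (counit a (ld b c)))
      _ ≤ c := counit b c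
  · intro h p q r
    set c := comp (comp r q) (comp r p) with hc
    set b := comp r q with hb
    rw [← hres1, ← hres1]
    have key : comp r (comp (ld r b) (ld r (ld b c))) ≤ c :=
      (hres1 _ _ _).mpr ((hres1 _ _ _).mpr (h r b c))
    refine le_trans ?_ key
    refine monoR r ?_
    refine le_trans (monoL p (unit r q)) (monoR _ ?_)
    exact (hres1 r p _).mp ((hres1 b (comp r p) c).mp le_rfl)
end

section
/- Let H be a complete Heyting algebra, let ◊ : H → H preserve arbitrary suprema, and let □ : H → H preserve arbitrary infima with left adjoint ◆ (◆x ≤ y iff x ≤ □y). Then the inequality ◊p ∧ □q ≤ ◊(p ∧ q) holds for all p, q ∈ H if and only if the inequality v ≤ ◊u → ◊(u ∧ ◆v) holds for all u, v ∈ H (where → is the Heyting implication). -/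
theorem stmt_12 {H : Type*} [Order.Frame H]
    (dia box bd : H → H)
    (hdia : ∀ S : Set H, dia (sSup S) = ⨆ s ∈ S, dia s)
    (hbox : ∀ S : Set H, box (sInf S) = ⨅ s ∈ S, box s)
    (hadj : ∀ x y : H, bd x ≤ y ↔ x ≤ box y) :
    (∀ p q : H, dia p ⊓ box q ≤ dia (p ⊓ q)) ↔
    (∀ u v : H, v ≤ dia u ⇨ dia (u ⊓ bd v)) := by
  have hmono : ∀ a b : H, a ≤ b → dia a ≤ dia b := by
    intro a b hab
    have h : dia (sSup {a, b}) = ⨆ s ∈ ({a, b} : Set H), dia s := hdia _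
    have hs : sSup ({a, b} : Set H) = b := by
      simp [sSup_pair, sup_eq_right.mpr hab]
    rw [hs] at h
    rw [h]
    exact le_biSup _ (by simp)
  constructor
  · intro h u v
    rw [le_himp_iff, inf_comm]
    have hv : v ≤ box (bd v) := (hadj v (bd v)).mp le_rfl
    calc dia u ⊓ v ≤ dia u ⊓ box (bd v) := inf_le_inf_left _ hv
      _ ≤ dia (u ⊓ bd v) := h u (bd v)
  · intro h p q
    have h1 := h p (box q)
    rw [le_himp_iff, inf_comm] at h1
    have h2 : bd (box q) ≤ q := (hadj (box q) q).mpr le_rfl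
    exact h1.trans (hmono _ _ (inf_le_inf_left _ h2))
end

section
/- Let L be a complete lattice, J join-dense and M meet-dense in L, and let ◊ : L → L preserve arbitrary suprema with right adjoint ■ (◊x ≤ y iff x ≤ ■y). Then the following are equivalent: (1) ◊◊p ≤ ◊p for all p ∈ L; (2) for all j ∈ J and m ∈ M, ◊◊j ≤ m whenever ◊j ≤ m; (3) for all j ∈ J, ◊◊j ≤ ◊j. -/
/-- `J` is join-dense in `L`. -/
def JoinDense {L : Type*} [CompleteLattice L] (J : Set L) : Prop :=
  ∀ a : L, a = sSup {j ∈ J | j ≤ a}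

/-- `M` is meet-dense in `L`. -/
def MeetDense {L : Type*} [CompleteLattice L] (M : Set L) : Prop :=
  ∀ a : L, a = sInf {m ∈ M | a ≤ m}

theorem stmt_17 {L : Type*} [CompleteLattice L] (J M : Set L)
    (hJ : JoinDense J) (hM : MeetDense M)
    (dia bsq : L → L)
    (hdia : ∀ S : Set L, dia (sSup S) = ⨆ s ∈ S, dia s)
    (hadj : ∀ x y : L, dia x ≤ y ↔ x ≤ bsq y) :
    List.TFAE
      [ ∀ p : L, dia (dia p) ≤ dia p,
        ∀ j ∈ J, ∀ m ∈ M, dia j ≤ m → dia (dia j) ≤ m,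
        ∀ j ∈ J, dia (dia j) ≤ dia j ] := by
  have hmono : Monotone dia := fun a b hab => by
    rw [hadj]; exact hab.trans ((hadj b (dia b)).mp le_rfl)
  tfae_have 1 → 2 := fun h j _ m _ hjm => (h j).trans hjm
  tfae_have 2 → 3 := by
    intro h j hj
    have hd := hM (dia j)
    conv_rhs => rw [hd]
    refine le_sInf fun m hm => ?_
    exact h j hj m hm.1 hm.2
  tfae_have 3 → 1 := by
    intro h p
    have hp := hJ p
    have h1 : dia p = ⨆ j ∈ {j ∈ J | j ≤ p}, dia j := by
      conv_lhs => rw [hp]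
      exact hdia _
    have h2 : dia (dia p) ≤ dia p := by
      rw [h1, ← sSup_image, hdia]
      refine iSup₂_le fun x hx => ?_
      obtain ⟨j, ⟨hjJ, hjp⟩, rfl⟩ := hx
      refine (h j hjJ).trans ?_
      exact le_sSup ⟨j, ⟨hjJ, hjp⟩, rfl⟩
    exact h2
  tfae_finish
end

section
/- Let L be a complete lattice, J ⊆ L join-dense, M ⊆ L meet-dense, and f : L → L preserving arbitrary suprema, g : L → L preserving arbitrary infima. Then the inequality f(p) ≤ g(p) holds for all p ∈ L if and only if f(j) ≤ g(m) for all j ∈ J, m ∈ M with j ≤ m. -/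
theorem stmt_18 {L : Type*} [CompleteLattice L] (J M : Set L)
    (hJ : JoinDense J) (hM : MeetDense M)
    (f g : L → L)
    (hf : ∀ S : Set L, f (sSup S) = ⨆ s ∈ S, f s)
    (hg : ∀ S : Set L, g (sInf S) = ⨅ s ∈ S, g s) :
    ((∀ p : L, f p ≤ g p) ↔
      ∀ j ∈ J, ∀ m ∈ M, (∃ p : L, j ≤ p ∧ p ≤ m) → f j ≤ g m) ∧
    ((∀ p : L, f p ≤ g p) ↔
      ∀ j ∈ J, ∀ m ∈ M, j ≤ m → f j ≤ g m) := by
  have fmono : Monotone f := by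
    intro a b hab
    have hs : sSup {a, b} = b := by simp [hab]
    calc f a ≤ ⨆ s ∈ ({a, b} : Set L), f s :=
          le_iSup_of_le a (le_iSup_of_le (by simp) le_rfl)
    _ = f (sSup {a, b}) := (hf _).symm
    _ = f b := by rw [hs]
  have gmono : Monotone g := by
    intro a b hab
    have : sInf {a, b} = a := by simp [hab]
    calc g a = g (sInf {a, b}) := by rw [this]
    _ = ⨅ s ∈ ({a, b} : Set L), g s := hg _
    _ ≤ g b := by
        refine iInf_le_of_le b (iInf_le_of_le (by simp) le_rfl)
  have key : (∀ j ∈ J, ∀ m ∈ M, j ≤ m → f j ≤ g m) → ∀ p : L, f p ≤ g p := by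
    intro h p
    have hp1 : f p = ⨆ j ∈ {j ∈ J | j ≤ p}, f j := by
      conv_lhs => rw [hJ p]
      exact hf _
    have hp2 : g p = ⨅ m ∈ {m ∈ M | p ≤ m}, g m := by
      conv_lhs => rw [hM p]
      exact hg _
    rw [hp1, hp2]
    refine iSup₂_le fun j hj => le_iInf₂ fun m hm => ?_
    exact h j hj.1 m hm.1 (hj.2.trans hm.2)
  constructor
  · constructor
    · intro h j hj m hm ⟨p, hjp, hpm⟩
      exact ((fmono hjp).trans (h p)).trans (gmono hpm)
    · intro h p
      exact key (fun j hj m hm hjm => h j hj m hm ⟨j, le_rfl, hjm⟩) p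
  · constructor
    · intro h j hj m hm hjm
      exact (h j).trans (gmono hjm)
    · exact key
end
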